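/- arXiv:2001.04257 — 2 statements merged into one kernel-verified Lean document; each statement's English description precedes it below -/
import Mathlib

section
/- If λ = (λ₁,...,λₙ) ∈ ℝⁿ with λ₁ ≤ λ₂ ≤ ... ≤ λₙ satisfies σ₁(λ) ≥ 0 and σ₂(λ) ≥ 0, then λ₁ + λ₂ + ... + λ_{n−1} ≥ 0. -/
/-- `j`-th elementary symmetric polynomial of `lam : Fin n → ℝ`. -/
noncomputable def esym (n j : ℕ) (lam : Fin n → ℝ) : ℝ :=
  ∑ s ∈ Finset.univ.powersetCard j, ∏ i ∈ s, lam i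

lemma sq_sum_aux (n : ℕ) (lam : Fin n → ℝ)
  (e2 : esym n 2 lam = ∑ p ∈ (Finset.univ ×ˢ Finset.univ).filter
      (fun p : Fin n × Fin n => p.1 < p.2), lam p.1 * lam p.2) :
    (∑ i, lam i)^2 = ∑ i, (lam i)^2 + 2 * esym n 2 lam := by
  have h0 : (∑ i, lam i)^2 = ∑ p ∈ Finset.univ ×ˢ Finset.univ, lam p.1 * lam p.2 := by
    rw [sq, Finset.sum_mul_sum, Finset.sum_product]
  rw [h0, ← Finset.sum_filter_add_sum_filter_not (Finset.univ ×ˢ Finset.univ)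
    (fun p : Fin n × Fin n => p.1 < p.2),
    ← Finset.sum_filter_add_sum_filter_not
      ((Finset.univ ×ˢ Finset.univ).filter (fun p : Fin n × Fin n => ¬ p.1 < p.2))
      (fun p : Fin n × Fin n => p.1 = p.2), Finset.filter_filter, Finset.filter_filter]
  have hd : ∑ p ∈ (Finset.univ ×ˢ Finset.univ).filter
      (fun p : Fin n × Fin n => ¬ p.1 < p.2 ∧ p.1 = p.2), lam p.1 * lam p.2
      = ∑ i, (lam i)^2 := by
    refine Finset.sum_nbij (i := fun p => p.1) ?_ ?_ ?_ ?_
    · simp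
    · rintro ⟨a, b⟩ hab ⟨c, d⟩ hcd h
      simp only [Finset.coe_filter, Set.mem_setOf_eq] at hab hcd
      simp only at h
      rw [Prod.ext_iff]
      exact ⟨h, by rw [← hab.2.2, ← hcd.2.2, h]⟩
    · intro i _
      exact ⟨(i, i), by simp, rfl⟩
    · rintro ⟨a, b⟩ hab
      simp only [Finset.mem_filter] at hab
      simp [← hab.2.2, sq]
  have hg : ∑ p ∈ (Finset.univ ×ˢ Finset.univ).filter
      (fun p : Fin n × Fin n => ¬ p.1 < p.2 ∧ ¬ p.1 = p.2), lam p.1 * lam p.2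
      = esym n 2 lam := by
    rw [e2]
    refine Finset.sum_nbij (i := Prod.swap) ?_ ?_ ?_ ?_
    · rintro ⟨a, b⟩ hab
      simp only [Finset.mem_filter] at hab ⊢
      refine ⟨by simp, ?_⟩
      have := hab.2
      simp only [Prod.swap]
      rcases lt_trichotomy a b with h | h | h
      · exact absurd h this.1
      · exact absurd h this.2
      · exact h
    · exact fun a _ b _ h => Prod.swap_injective h
    · rintro ⟨a, b⟩ hab
      refine ⟨(b, a), ?_, rfl⟩
      simp only [Finset.coe_filter, Set.mem_setOf_eq] at hab ⊢
      exact ⟨by simp, not_lt.mpr hab.2.le, fun h => hab.2.ne (h.symm)⟩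
    · rintro ⟨a, b⟩ _
      simp [mul_comm]
  rw [hd, hg, e2]; ring

lemma esym_one' (n : ℕ) (lam : Fin n → ℝ) : esym n 1 lam = ∑ i, lam i := by
  simp [esym, Finset.powersetCard_one, Finset.sum_map]

lemma esym_two' (n : ℕ) (lam : Fin n → ℝ) :
    esym n 2 lam = ∑ p ∈ (Finset.univ ×ˢ Finset.univ).filter
      (fun p : Fin n × Fin n => p.1 < p.2), lam p.1 * lam p.2 := by
  rw [esym]
  refine (Finset.sum_nbij (i := fun p : Fin n × Fin n => ({p.1, p.2} : Finset (Fin n)))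
    ?_ ?_ ?_ ?_).symm
  · rintro ⟨a, b⟩ hab
    simp only [Finset.mem_filter] at hab
    simp [Finset.mem_powersetCard_univ, Finset.card_pair hab.2.ne]
  · rintro ⟨a, b⟩ hab ⟨c, d⟩ hcd h
    simp only [Finset.coe_filter, Set.mem_setOf_eq] at hab hcd
    have hab' := hab.2; have hcd' := hcd.2
    simp only at h
    have : a = c ∧ b = d := by
      have hac : a ∈ ({c, d} : Finset (Fin n)) := h ▸ (by simp)
      have hbd : b ∈ ({c, d} : Finset (Fin n)) := h ▸ (by simp)
      have hca : c ∈ ({a, b} : Finset (Fin n)) := h ▸ (by simp)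
      simp only [Finset.mem_insert, Finset.mem_singleton] at hac hbd hca
      rcases hac with rfl | rfl
      · rcases hbd with rfl | rfl
        · omega
        · exact ⟨rfl, rfl⟩
      · rcases hca with rfl | rfl
        · omega
        · omega
    simp [this.1, this.2]
  · intro s hs
    simp only [Finset.mem_coe, Finset.mem_powersetCard_univ] at hs
    obtain ⟨a, b, hne, rfl⟩ := Finset.card_eq_two.mp hs
    rcases lt_or_gt_of_ne hne with h | h
    · exact ⟨(a, b), by simp [h], rfl⟩
    · exact ⟨(b, a), by simp [h], by simp [Finset.pair_comm]⟩
  · rintro ⟨a, b⟩ hab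
    simp only [Finset.mem_filter] at hab
    rw [Finset.prod_pair hab.2.ne]


/-- if `λ₁ ≤ … ≤ λₙ`, `σ₁(λ) ≥ 0` and `σ₂(λ) ≥ 0`, then the sum of the
`n−1` smallest entries is nonnegative. -/
theorem stmt1 (n : ℕ) (hn : 2 ≤ n) (lam : Fin n → ℝ) (hsort : Monotone lam)
    (h1 : 0 ≤ esym n 1 lam) (h2 : 0 ≤ esym n 2 lam) :
    0 ≤ ∑ i ∈ Finset.univ.filter (fun i : Fin n => (i : ℕ) < n - 1), lam i := by
  have key := sq_sum_aux n lam (esym_two' n lam)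
  rw [esym_one'] at h1
  set S := ∑ i, lam i with hS
  set m : Fin n := ⟨n - 1, by omega⟩ with hm
  have hm2 : (lam m)^2 ≤ ∑ i, (lam i)^2 :=
    Finset.single_le_sum (f := fun i => (lam i)^2) (fun i _ => sq_nonneg _)
      (Finset.mem_univ m)
  have hle : lam m ≤ S := by nlinarith
  have hmval : (m : ℕ) = n - 1 := rfl
  have hfe : Finset.univ.filter (fun i : Fin n => (i : ℕ) < n - 1)
      = Finset.univ.erase m := by
    ext i
    simp only [Finset.mem_filter, Finset.mem_univ, true_and, Finset.mem_erase, and_true]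
    constructor
    · intro h heq
      rw [heq, hmval] at h
      omega
    · intro hne
      have hi := i.isLt
      have hv : (i : ℕ) ≠ n - 1 := fun hc => hne (Fin.ext (hc.trans hmval.symm))
      omega
  rw [hfe, Finset.sum_erase_eq_sub (Finset.mem_univ m)]
  linarith
end

section
/- For integers n ≥ 3 and 2 ≤ k ≤ n and every T > 0, there exists a unique p ∈ ℝ such that ∫_{−∞}^{0} {1 + e^{−2η − 2p}[1 − e^{nη}]^{1/k}}^{−1/2} dη = T. -/
/-!
Write `g η = (1 - e^{nη})^{1/k}`, so that `0 < g ≤ 1` on `η < 0` and `g` is bounded below by a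
positive constant on `η ≤ -1`. Then the integrand is at most `1`, is at most `e^{η + p} g(-1)^{-1/2}`
for `η ≤ -1`, and is continuous and strictly increasing in `p`; by dominated convergence the
integral `F p` is a continuous strictly increasing function with `F p → 0` as `p → -∞`. Since the
integrand is at least `1/2` on `(-p, 0)`, `F p ≥ p / 2`, and the intermediate value theorem gives
the unique solution of `F p = T`.
-/

open Real MeasureTheory Filter Set Topology

noncomputable def profileIntegrand (g : ℝ → ℝ) (p η : ℝ) : ℝ :=
  (1 + exp (-2 * η - 2 * p) * g η) ^ (-(1 : ℝ) / 2)

noncomputable def profileIntegral (g : ℝ → ℝ) (p : ℝ) : ℝ :=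
  ∫ η in Iio 0, profileIntegrand g p η

section Integrand

variable {g : ℝ → ℝ} {η : ℝ}

lemma one_le_one_add_exp_mul (x : ℝ) {y : ℝ} (hy : 0 ≤ y) : 1 ≤ 1 + exp x * y :=
  le_add_of_nonneg_right (mul_nonneg (exp_pos x).le hy)

lemma profileIntegrand_pos (p : ℝ) (hg : 0 ≤ g η) : 0 < profileIntegrand g p η :=
  rpow_pos_of_pos (one_pos.trans_le (one_le_one_add_exp_mul _ hg)) _

lemma profileIntegrand_le_one (p : ℝ) (hg : 0 ≤ g η) : profileIntegrand g p η ≤ 1 :=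
  rpow_le_one_of_one_le_of_nonpos (one_le_one_add_exp_mul _ hg) (by norm_num)

lemma strictMono_profileIntegrand (hg : 0 < g η) : StrictMono (profileIntegrand g · η) := by
  intro p q hpq
  refine rpow_lt_rpow_of_neg (one_pos.trans_le (one_le_one_add_exp_mul _ hg.le)) ?_ (by norm_num)
  have : exp (-2 * η - 2 * q) < exp (-2 * η - 2 * p) := exp_lt_exp.mpr (by linarith)
  gcongr

lemma norm_profileIntegrand_le (hg : 0 < g η) {p q : ℝ} (hpq : p ≤ q) :
    ‖profileIntegrand g p η‖ ≤ profileIntegrand g q η := by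
  rw [norm_of_nonneg (profileIntegrand_pos p hg.le).le]
  exact (strictMono_profileIntegrand hg).monotone hpq

lemma profileIntegrand_le_exp_mul {c : ℝ} (p : ℝ) (hc : 0 < c) (hcg : c ≤ g η) :
    profileIntegrand g p η ≤ exp (η + p) * c ^ (-(1 : ℝ) / 2) :=
  calc profileIntegrand g p η ≤ (exp (-2 * η - 2 * p) * c) ^ (-(1 : ℝ) / 2) := by
        refine rpow_le_rpow_of_nonpos (by positivity) ?_ (by norm_num)
        have := mul_le_mul_of_nonneg_left hcg (exp_pos (-2 * η - 2 * p)).le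
        linarith
    _ = exp (η + p) * c ^ (-(1 : ℝ) / 2) := by
        rw [mul_rpow (exp_pos _).le hc.le, ← exp_mul]
        ring_nf

lemma continuous_profileIntegrand (hg : 0 ≤ g η) : Continuous (profileIntegrand g · η) :=
  (by fun_prop : Continuous fun p => 1 + exp (-2 * η - 2 * p) * g η).rpow_const
    fun _ => Or.inl (one_pos.trans_le (one_le_one_add_exp_mul _ hg)).ne'

lemma tendsto_profileIntegrand_atBot (hg : 0 < g η) :
    Tendsto (profileIntegrand g · η) atBot (𝓝 0) := by
  have hlin : Tendsto (fun p : ℝ => -2 * η - 2 * p) atBot atTop :=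
    (tendsto_atTop_add_const_left _ (-2 * η)
      (tendsto_id.const_mul_atBot_of_neg (by norm_num : (-2 : ℝ) < 0))).congr fun p => by
      simp only [id]; ring
  have hbase : Tendsto (fun p => 1 + exp (-2 * η - 2 * p) * g η) atBot atTop :=
    tendsto_atTop_add_const_left _ _ ((tendsto_exp_atTop.comp hlin).atTop_mul_const hg)
  have := (tendsto_rpow_neg_atTop (by norm_num : (0 : ℝ) < 1 / 2)).comp hbase
  rwa [show -(1 / 2 : ℝ) = -1 / 2 by norm_num] at this

lemma half_le_profileIntegrand {p : ℝ} (hg : 0 ≤ g η) (hg1 : g η ≤ 1) (hη : -p < η) :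
    1 / 2 ≤ profileIntegrand g p η := by
  set x := 1 + exp (-2 * η - 2 * p) * g η
  have hx1 : 1 ≤ x := one_le_one_add_exp_mul _ hg
  have hx2 : x ≤ 2 := by
    have : exp (-2 * η - 2 * p) ≤ 1 := exp_le_one_iff.mpr (by linarith)
    have := mul_le_one₀ this hg hg1
    linarith
  calc (1 / 2 : ℝ) ≤ x⁻¹ := by rw [one_div]; exact inv_anti₀ (by positivity) hx2
    _ = x ^ (-1 : ℝ) := (rpow_neg_one x).symm
    _ ≤ x ^ (-(1 : ℝ) / 2) := rpow_le_rpow_of_exponent_le hx1 (by norm_num)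

end Integrand

section Integral

variable {g : ℝ → ℝ}

lemma integrableOn_profileIntegrand (hmeas : Measurable g) (hg : ∀ η < 0, 0 ≤ g η) {c : ℝ}
    (hc : 0 < c) (hcg : ∀ η ≤ -1, c ≤ g η) (p : ℝ) :
    IntegrableOn (profileIntegrand g p) (Iio 0) := by
  have hmeas' : Measurable (profileIntegrand g p) := by unfold profileIntegrand; fun_prop
  rw [← Iic_union_Ioo_eq_Iio (by norm_num : (-1 : ℝ) < 0)]
  refine IntegrableOn.union ?_ ?_
  · have hexp : IntegrableOn (fun η => exp (η + p) * c ^ (-(1 : ℝ) / 2)) (Iic (-1)) := by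
      simp_rw [exp_add, mul_assoc]
      exact (integrableOn_exp_Iic (-1)).mul_const _
    refine hexp.mono' hmeas'.aestronglyMeasurable (ae_restrict_of_forall_mem measurableSet_Iic
      fun η hη => ?_)
    have hη0 : η < 0 := lt_of_le_of_lt hη (by norm_num)
    rw [norm_of_nonneg (profileIntegrand_pos p (hg η hη0)).le]
    exact profileIntegrand_le_exp_mul p hc (hcg η hη)
  · refine Measure.integrableOn_of_bounded (M := 1) (by simp) hmeas'.aestronglyMeasurable
      (ae_restrict_of_forall_mem measurableSet_Ioo fun η hη => ?_)
    rw [norm_of_nonneg (profileIntegrand_pos p (hg η hη.2)).le]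
    exact profileIntegrand_le_one p (hg η hη.2)

variable (hint : ∀ p, IntegrableOn (profileIntegrand g p) (Iio 0)) (hg : ∀ η < 0, 0 < g η)
include hint hg

lemma strictMono_profileIntegral : StrictMono (profileIntegral g) := by
  intro p q hpq
  have hpos : 0 < ∫ η in Iio 0, (profileIntegrand g q η - profileIntegrand g p η) := by
    refine (setIntegral_pos_iff_support_of_nonneg_ae (ae_restrict_of_forall_mem measurableSet_Iio
      fun η hη => sub_nonneg.mpr ((strictMono_profileIntegrand (hg η hη)).monotone hpq.le))
      ((hint q).sub (hint p))).mpr ?_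
    have hsupp : Iio 0 ⊆ Function.support (fun η => profileIntegrand g q η -
        profileIntegrand g p η) ∩ Iio 0 :=
      fun η hη => ⟨(sub_pos.mpr (strictMono_profileIntegrand (hg η hη) hpq)).ne', hη⟩
    exact (by simp : 0 < volume (Iio (0 : ℝ))).trans_le (measure_mono hsupp)
  rw [integral_sub (hint q) (hint p)] at hpos
  exact sub_pos.mp hpos

lemma continuous_profileIntegral : Continuous (profileIntegral g) := by
  refine continuous_iff_continuousAt.mpr fun p₀ => continuousAt_of_dominated
    (Eventually.of_forall fun p => (hint p).aestronglyMeasurable)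
    ((eventually_le_nhds (lt_add_one p₀)).mono fun p hp => ae_restrict_of_forall_mem
      measurableSet_Iio fun η hη => norm_profileIntegrand_le (hg η hη) hp)
    (hint (p₀ + 1)) (ae_restrict_of_forall_mem measurableSet_Iio fun η hη => ?_)
  exact (continuous_profileIntegrand (hg η hη).le).continuousAt

lemma tendsto_profileIntegral_atBot : Tendsto (profileIntegral g) atBot (𝓝 0) := by
  have := tendsto_integral_filter_of_dominated_convergence (μ := volume.restrict (Iio 0))
    (f := fun _ => (0 : ℝ)) _ (Eventually.of_forall fun p => (hint p).aestronglyMeasurable)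
    ((eventually_le_atBot 0).mono fun p hp => ae_restrict_of_forall_mem
      measurableSet_Iio fun η hη => norm_profileIntegrand_le (hg η hη) hp)
    (hint 0) (ae_restrict_of_forall_mem measurableSet_Iio fun η hη =>
      tendsto_profileIntegrand_atBot (hg η hη))
  rwa [integral_zero] at this

lemma half_mul_le_profileIntegral (hg1 : ∀ η < 0, g η ≤ 1) {p : ℝ} (hp : 0 ≤ p) :
    p / 2 ≤ profileIntegral g p := by
  have hhead : 1 / 2 * volume.real (Ioo (-p) 0) ≤ ∫ η in Ioo (-p) 0, profileIntegrand g p η :=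
    setIntegral_ge_of_const_le_real measurableSet_Ioo (by simp)
      (fun η hη => half_le_profileIntegrand (hg η hη.2).le (hg1 η hη.2) hη.1)
      ((hint p).mono_set Ioo_subset_Iio_self)
  rw [Real.volume_real_Ioo_of_le (by linarith)] at hhead
  calc p / 2 = 1 / 2 * (0 - -p) := by ring
    _ ≤ _ := hhead
    _ ≤ profileIntegral g p := setIntegral_mono_set (hint p)
      (ae_restrict_of_forall_mem measurableSet_Iio fun η hη =>
        (profileIntegrand_pos p (hg η hη).le).le)
      Ioo_subset_Iio_self.eventuallyLE

end Integral

lemma StrictMono.existsUnique_eq_of_tendsto {F : ℝ → ℝ} (hmono : StrictMono F)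
    (hcont : Continuous F) {a : ℝ} (hbot : Tendsto F atBot (𝓝 a)) (htop : Tendsto F atTop atTop)
    {T : ℝ} (hT : a < T) : ∃! p, F p = T := by
  obtain ⟨x, hx⟩ := (hbot.eventually_lt_const hT).exists
  obtain ⟨y, hy⟩ := (htop.eventually_gt_atTop T).exists
  obtain ⟨p, hp⟩ := intermediate_value_univ x y hcont ⟨hx.le, hy.le⟩
  exact ⟨p, hp, fun q hq => hmono.injective (hq.trans hp.symm)⟩

section

variable {n : ℕ} (hn : 0 < n) (k : ℕ)
include hn

lemma one_sub_exp_mul_pos {η : ℝ} (hη : η < 0) : 0 < 1 - exp (n * η) := by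
  have : exp (n * η) < 1 := exp_lt_one_iff.mpr (mul_neg_of_pos_of_neg (by exact_mod_cast hn) hη)
  linarith

lemma one_sub_exp_mul_rpow_pos {η : ℝ} (hη : η < 0) : 0 < (1 - exp (n * η)) ^ ((1 : ℝ) / k) :=
  rpow_pos_of_pos (one_sub_exp_mul_pos hn hη) _

lemma one_sub_exp_mul_rpow_le_one {η : ℝ} (hη : η < 0) : (1 - exp (n * η)) ^ ((1 : ℝ) / k) ≤ 1 :=
  rpow_le_one (one_sub_exp_mul_pos hn hη).le (by linarith [exp_pos (n * η)])
    (by positivity)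

lemma one_sub_exp_mul_rpow_neg_one_le {η : ℝ} (hη : η ≤ -1) :
    (1 - exp (n * -1)) ^ ((1 : ℝ) / k) ≤ (1 - exp (n * η)) ^ ((1 : ℝ) / k) := by
  refine rpow_le_rpow (one_sub_exp_mul_pos hn (by norm_num)).le ?_ (by positivity)
  have : exp (n * η) ≤ exp (n * -1) := exp_le_exp.mpr (by gcongr)
  linarith

end

theorem stmt5_general (n k : ℕ) (hn : 3 ≤ n) (T : ℝ) (hT : 0 < T) :
    ∃! p : ℝ,
      (∫ η in Set.Iio (0 : ℝ),
        (1 + Real.exp (-2 * η - 2 * p) * (1 - Real.exp ((n : ℝ) * η)) ^ ((1 : ℝ) / k))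
          ^ (-(1 : ℝ) / 2)) = T := by
  have hn0 : 0 < n := by omega
  set g : ℝ → ℝ := fun η => (1 - exp (n * η)) ^ ((1 : ℝ) / k)
  have hg : ∀ η < 0, 0 < g η := fun η => one_sub_exp_mul_rpow_pos hn0 k
  have hint : ∀ p, IntegrableOn (profileIntegrand g p) (Iio 0) :=
    integrableOn_profileIntegrand (by fun_prop) (fun η hη => (hg η hη).le)
      (one_sub_exp_mul_rpow_pos hn0 k (by norm_num)) fun η => one_sub_exp_mul_rpow_neg_one_le hn0 k
  have htop : Tendsto (profileIntegral g) atTop atTop :=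
    tendsto_atTop_mono' _ ((eventually_ge_atTop 0).mono fun p hp =>
      half_mul_le_profileIntegral hint hg (fun η => one_sub_exp_mul_rpow_le_one hn0 k) hp)
      (tendsto_id.atTop_div_const two_pos)
  exact (strictMono_profileIntegral hint hg).existsUnique_eq_of_tendsto
    (continuous_profileIntegral hint hg) (tendsto_profileIntegral_atBot hint hg) htop hT

/-- for `n ≥ 3`, `2 ≤ k ≤ n` and every `T > 0`, there exists a unique `p ∈ ℝ` with
`∫_{−∞}^{0} {1 + e^{−2η − 2p}[1 − e^{nη}]^{1/k}}^{−1/2} dη = T`. -/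
theorem stmt5 (n k : ℕ) (hn : 3 ≤ n) (hk2 : 2 ≤ k) (hkn : k ≤ n) (T : ℝ) (hT : 0 < T) :
    ∃! p : ℝ,
      (∫ η in Set.Iio (0 : ℝ),
        (1 + Real.exp (-2 * η - 2 * p) * (1 - Real.exp ((n : ℝ) * η)) ^ ((1 : ℝ) / k))
          ^ (-(1 : ℝ) / 2)) = T :=
  stmt5_general n k hn T hT
end
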